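/- Let p be a prime and r = p - 1. Then U_p = Q^p A Q^{-1} A^{-p}, where A = [[1,0],[1,1]], Q = [[1,(p-1)/p],[0,1]], U_p = [[p,0],[0,1/p]]. In particular U_p lies in the subgroup of SL_2(Z[1/p]) generated by A and Q. -/

import Mathlib

abbrev SL2Q := Matrix.SpecialLinearGroup (Fin 2) ℚ

/-- A = [[1,0],[1,1]] -/
def matA : SL2Q := ⟨!![1,0;1,1], by norm_num [Matrix.det_fin_two_of]⟩
/-- B = [[0,1],[-1,0]] -/
def matB : SL2Q := ⟨!![0,1;-1,0], by norm_num [Matrix.det_fin_two_of]⟩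
/-- Q_q = [[1,q],[0,1]] -/
def matQ (q : ℚ) : SL2Q := ⟨!![1,q;0,1], by norm_num [Matrix.det_fin_two_of]⟩
/-- U_p = [[p,0],[0,1/p]] -/
def matU (p : ℚ) (hp : p ≠ 0) : SL2Q := ⟨!![p,0;0,p⁻¹], by rw [Matrix.det_fin_two_of]; field_simp; norm_num⟩
/-- lower unipotent [[1,0],[x,1]] -/
def matL (x : ℚ) : SL2Q := ⟨!![1,0;x,1], by norm_num [Matrix.det_fin_two_of]⟩

/-! Both unipotent families are additive in their parameter, so with q = (p - 1)/p we get
Q^p = Q_{p-1}, Q⁻¹ = Q_{1/p - 1} and A^{-p} = L_{-p}. For every x ≠ 0 the product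
Q_{x-1} L_1 Q_{1/x-1} L_{-x} is diag(x, 1/x), a direct 2 × 2 computation; at x = p this is the
claimed factorization, whose factors visibly lie in the subgroup generated by A and Q. -/

@[simp] theorem coe_matQ (q : ℚ) : (matQ q : Matrix (Fin 2) (Fin 2) ℚ) = !![1, q; 0, 1] := rfl

@[simp] theorem coe_matL (x : ℚ) : (matL x : Matrix (Fin 2) (Fin 2) ℚ) = !![1, 0; x, 1] := rfl

@[simp] theorem coe_matU {x : ℚ} (hx : x ≠ 0) :
    (matU x hx : Matrix (Fin 2) (Fin 2) ℚ) = !![x, 0; 0, x⁻¹] := rfl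

theorem matA_eq_matL_one : matA = matL 1 := rfl

def matQHom : Multiplicative ℚ →* SL2Q where
  toFun x := matQ x.toAdd
  map_one' := by ext i j; fin_cases i <;> fin_cases j <;> rfl
  map_mul' x y := by ext : 1; simp [add_comm]

def matLHom : Multiplicative ℚ →* SL2Q where
  toFun x := matL x.toAdd
  map_one' := by ext i j; fin_cases i <;> fin_cases j <;> rfl
  map_mul' x y := by ext : 1; simp

theorem matQ_inv (q : ℚ) : (matQ q)⁻¹ = matQ (-q) :=
  (map_inv matQHom (Multiplicative.ofAdd q)).symm

theorem matQ_pow (q : ℚ) (n : ℕ) : matQ q ^ n = matQ (n * q) := by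
  simpa [matQHom, ← ofAdd_nsmul] using (map_pow matQHom (Multiplicative.ofAdd q) n).symm

theorem matL_zpow (x : ℚ) (n : ℤ) : matL x ^ n = matL (n * x) := by
  simpa [matLHom, ← ofAdd_zsmul] using (map_zpow matLHom (Multiplicative.ofAdd x) n).symm

theorem matA_zpow (n : ℤ) : matA ^ n = matL n := by
  rw [matA_eq_matL_one, matL_zpow, mul_one]

theorem matU_eq_matQ_mul_matL {x : ℚ} (hx : x ≠ 0) :
    matU x hx = matQ (x - 1) * matL 1 * matQ (x⁻¹ - 1) * matL (-x) := by
  ext : 1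
  simp
  field_simp
  ring_nf

theorem stmt13 (p : ℕ) (hp : p.Prime) :
    matU p (Nat.cast_ne_zero.mpr hp.ne_zero) =
      (matQ (((p:ℚ)-1)/p))^p * matA * (matQ (((p:ℚ)-1)/p))⁻¹ * matA^(-(p:ℤ)) ∧
    matU p (Nat.cast_ne_zero.mpr hp.ne_zero) ∈ Subgroup.closure {matA, matQ (((p:ℚ)-1)/p)} := by
  set q : ℚ := ((p : ℚ) - 1) / p with hq
  have hp₀ : (p : ℚ) ≠ 0 := Nat.cast_ne_zero.mpr hp.ne_zero
  have hU : matU p hp₀ = matQ q ^ p * matA * (matQ q)⁻¹ * matA ^ (-(p : ℤ)) := by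
    have hpow : (p : ℚ) * q = p - 1 := by rw [hq]; field_simp
    have hneg : -q = (p : ℚ)⁻¹ - 1 := by rw [hq]; field_simp; ring
    rw [matQ_pow, matQ_inv, matA_zpow, hpow, hneg, matA_eq_matL_one, matU_eq_matQ_mul_matL hp₀]
    push_cast
    rfl
  refine ⟨hU, hU ▸ ?_⟩
  have hA : matA ∈ Subgroup.closure {matA, matQ q} := Subgroup.subset_closure (by simp)
  have hQ : matQ q ∈ Subgroup.closure {matA, matQ q} := Subgroup.subset_closure (by simp)
  exact mul_mem (mul_mem (mul_mem (pow_mem hQ p) hA) (inv_mem hQ)) (zpow_mem hA _)
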